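/- arXiv:1201.0891 — 2 statements merged into one kernel-verified Lean document; each statement's English description precedes it below -/
import Mathlib

section
/- For every positive semidefinite d×d matrix ρ with tr(ρ) ≤ 1, the reachable space of the nondeterministic quantum program starting in ρ equals the reachable space of its average: ⋁{supp(T_f(ρ)) : f a word over {1,…,m}} = ⋁_{n≥0} supp(T^n(ρ)), where T = (1/m)·∑_{i=1}^m T_i is the average super-operator. -/
noncomputable section
open Matrix
open scoped ComplexOrder

variable {d m r : ℕ}

/-- One step of process `i`: `T_i(ρ) = E_i(M₁ ρ M₁†) = ∑_j (E_{i,j} M₁) ρ (E_{i,j} M₁)†`. -/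
def Tstep (E : Fin m → Fin r → Matrix (Fin d) (Fin d) ℂ)
    (M1 : Matrix (Fin d) (Fin d) ℂ) (i : Fin m)
    (ρ : Matrix (Fin d) (Fin d) ℂ) : Matrix (Fin d) (Fin d) ℂ :=
  ∑ j, (E i j * M1) * ρ * (E i j * M1)ᴴ

/-- `T_f` for a word `f = s₁⋯s_n`: apply `T_{s₁}` first, then `T_{s₂}`, …, `T_{s_n}`. -/
def Tword (E : Fin m → Fin r → Matrix (Fin d) (Fin d) ℂ)
    (M1 : Matrix (Fin d) (Fin d) ℂ) (f : List (Fin m))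
    (ρ : Matrix (Fin d) (Fin d) ℂ) : Matrix (Fin d) (Fin d) ℂ :=
  f.foldl (fun σ k => Tstep E M1 k σ) ρ

/-- The support of a matrix: its column space, as a subspace of `ℂ^d`. -/
def supp (A : Matrix (Fin d) (Fin d) ℂ) : Submodule ℂ (Fin d → ℂ) :=
  LinearMap.range (Matrix.toLin' A)

/-- Length-`n` prefix of a schedule. -/
def prefixn (s : ℕ → Fin m) (n : ℕ) : List (Fin m) :=
  List.ofFn (fun i : Fin n => s i)

/-- Termination probability within a word `f`. -/
def tWord (E : Fin m → Fin r → Matrix (Fin d) (Fin d) ℂ)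
    (M0 M1 : Matrix (Fin d) (Fin d) ℂ) (f : List (Fin m))
    (ρ : Matrix (Fin d) (Fin d) ℂ) : ℝ :=
  ∑ n ∈ Finset.range (f.length + 1),
    (M0 * Tword E M1 (f.take n) ρ * M0ᴴ).trace.re

/-- Termination probability along a schedule `s`. -/
def tSched (E : Fin m → Fin r → Matrix (Fin d) (Fin d) ℂ)
    (M0 M1 : Matrix (Fin d) (Fin d) ℂ) (s : ℕ → Fin m)
    (ρ : Matrix (Fin d) (Fin d) ℂ) : ℝ :=
  ∑' n : ℕ, (M0 * Tword E M1 (prefixn s n) ρ * M0ᴴ).trace.re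

/-- Termination probability `t(ρ)`: infimum over all schedules. -/
def tInf (E : Fin m → Fin r → Matrix (Fin d) (Fin d) ℂ)
    (M0 M1 : Matrix (Fin d) (Fin d) ℂ)
    (ρ : Matrix (Fin d) (Fin d) ℂ) : ℝ :=
  ⨅ s : ℕ → Fin m, tSched E M0 M1 s ρ

/-- The reachable space `H_{R(ρ)}`. -/
def HR (E : Fin m → Fin r → Matrix (Fin d) (Fin d) ℂ)
    (M1 : Matrix (Fin d) (Fin d) ℂ)
    (ρ : Matrix (Fin d) (Fin d) ℂ) : Submodule ℂ (Fin d → ℂ) :=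
  ⨆ f : List (Fin m), supp (Tword E M1 f ρ)

/-- The average super-operator `T = (1/m) ∑ T_i`. -/
def Tavg (E : Fin m → Fin r → Matrix (Fin d) (Fin d) ℂ)
    (M1 : Matrix (Fin d) (Fin d) ℂ)
    (ρ : Matrix (Fin d) (Fin d) ℂ) : Matrix (Fin d) (Fin d) ℂ :=
  ((m : ℂ)⁻¹) • ∑ i : Fin m, Tstep E M1 i ρ

/-- `H_{R̄_n(ρ)} = ⋁_{k=0}^n supp(T^k(ρ))`. -/
def HRbar (E : Fin m → Fin r → Matrix (Fin d) (Fin d) ℂ)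
    (M1 : Matrix (Fin d) (Fin d) ℂ)
    (ρ : Matrix (Fin d) (Fin d) ℂ) (n : ℕ) : Submodule ℂ (Fin d → ℂ) :=
  ⨆ k : Fin (n + 1), supp ((Tavg E M1)^[k] ρ)

/-- Reachable termination probability `h(ρ)`. -/
def hProb (E : Fin m → Fin r → Matrix (Fin d) (Fin d) ℂ)
    (M0 M1 : Matrix (Fin d) (Fin d) ℂ)
    (ρ : Matrix (Fin d) (Fin d) ℂ) : ℝ :=
  sInf { x : ℝ | ∃ σ : Matrix (Fin d) (Fin d) ℂ,
    σ.PosSemidef ∧ σ.trace = 1 ∧ supp σ ≤ HR E M1 ρ ∧ x = tInf E M0 M1 σ }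

/-- `PD_f`: pure states diverging within the word `f`. -/
def PDword (E : Fin m → Fin r → Matrix (Fin d) (Fin d) ℂ)
    (M0 M1 : Matrix (Fin d) (Fin d) ℂ) (f : List (Fin m)) : Set (Fin d → ℂ) :=
  { x : Fin d → ℂ | tWord E M0 M1 f (Matrix.vecMulVec x (star x)) = 0 }

/-- `PD_n`: union of `PD_f` over words of length `n`. -/
def PDn (E : Fin m → Fin r → Matrix (Fin d) (Fin d) ℂ)
    (M0 M1 : Matrix (Fin d) (Fin d) ℂ) (n : ℕ) : Set (Fin d → ℂ) :=
  { x : Fin d → ℂ | ∃ f : List (Fin m), f.length = n ∧ x ∈ PDword E M0 M1 f }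

/-- `PD`: the diverging pure states. -/
def PD (E : Fin m → Fin r → Matrix (Fin d) (Fin d) ℂ)
    (M0 M1 : Matrix (Fin d) (Fin d) ℂ) : Set (Fin d → ℂ) :=
  { x : Fin d → ℂ | ∃ s : ℕ → Fin m, tSched E M0 M1 s (Matrix.vecMulVec x (star x)) = 0 }

/-!
Since `T^n = m⁻ⁿ ∑_{|f| = n} T_f`, the matrix `T^n(ρ)` is a positive multiple of the sum of the
positive semidefinite matrices `T_f(ρ)` over the words `f` of length `n`. The support of such a
sum is the join of the supports of its terms: if `x` is in the kernel of the sum, then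
`⟨x, T_f(ρ) x⟩ = 0` for every summand, so `x` is in every kernel by positivity, and the support of
a Hermitian matrix is the orthogonal complement of its kernel. Joining over all `n` gives the join
over all words.
-/

theorem LinearMap.IsSymmetric.range_le_range_of_ker_le {𝕜 E : Type*} [RCLike 𝕜]
    [NormedAddCommGroup E] [InnerProductSpace 𝕜 E] [FiniteDimensional 𝕜 E]
    {S T : E →ₗ[𝕜] E} (hS : S.IsSymmetric) (hT : T.IsSymmetric) (h : ker S ≤ ker T) :
    range T ≤ range S := by
  rw [← (range S).orthogonal_orthogonal, hS.orthogonal_range]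
  exact (range T).le_orthogonal_orthogonal.trans
    (hT.orthogonal_range ▸ Submodule.orthogonal_le h)

namespace Matrix

variable {𝕜 n : Type*} [RCLike 𝕜] [Fintype n] [DecidableEq n]

theorem IsHermitian.range_toLin'_le_of_ker_le {A S : Matrix n n 𝕜} (hA : A.IsHermitian)
    (hS : S.IsHermitian) (h : LinearMap.ker (toLin' S) ≤ LinearMap.ker (toLin' A)) :
    LinearMap.range (toLin' A) ≤ LinearMap.range (toLin' S) := by
  rintro _ ⟨y, rfl⟩
  have hker : LinearMap.ker (toEuclideanLin S) ≤ LinearMap.ker (toEuclideanLin A) := by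
    intro z hz
    exact congrArg (WithLp.toLp 2) (h (show WithLp.ofLp z ∈ _ from congrArg WithLp.ofLp hz))
  obtain ⟨z, hz⟩ := (isSymmetric_toEuclideanLin_iff.mpr hS).range_le_range_of_ker_le
    (isSymmetric_toEuclideanLin_iff.mpr hA) hker ⟨WithLp.toLp 2 y, rfl⟩
  exact ⟨WithLp.ofLp z, congrArg WithLp.ofLp hz⟩

theorem range_toLin'_sum_of_posSemidef {ι : Type*} [Fintype ι] {F : ι → Matrix n n 𝕜}
    (hF : ∀ i, (F i).PosSemidef) :
    LinearMap.range (toLin' (∑ i, F i)) = ⨆ i, LinearMap.range (toLin' (F i)) := by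
  have hsum : (∑ i, F i).PosSemidef := posSemidef_sum _ fun i _ => hF i
  refine le_antisymm ?_ (iSup_le fun i => ?_)
  · rintro _ ⟨y, rfl⟩
    rw [toLin'_apply, sum_mulVec]
    exact Submodule.sum_mem _ fun i _ => Submodule.mem_iSup_of_mem i ⟨y, rfl⟩
  · refine (hF i).isHermitian.range_toLin'_le_of_ker_le hsum.isHermitian fun x hx => ?_
    rw [LinearMap.mem_ker, toLin'_apply] at hx ⊢
    have hzero : ∑ j, star x ⬝ᵥ F j *ᵥ x = 0 := by
      rw [← dotProduct_sum, ← sum_mulVec, hx, dotProduct_zero]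
    rw [← (hF i).dotProduct_mulVec_zero_iff]
    exact Finset.sum_eq_zero_iff_of_nonneg (fun j _ => (hF j).dotProduct_mulVec_nonneg x) |>.mp
      hzero i (Finset.mem_univ i)

end Matrix

theorem List.iSup_eq_iSup_ofFn {α β : Type*} [CompleteLattice β] (F : List α → β) :
    ⨆ f, F f = ⨆ n, ⨆ g : Fin n → α, F (List.ofFn g) := by
  rw [← List.equivSigmaTuple.symm.iSup_comp, iSup_sigma]
  rfl

theorem Fintype.sum_ofFn_succ {α M : Type*} [Fintype α] [AddCommMonoid M] (n : ℕ)
    (F : List α → M) :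
    ∑ g : Fin (n + 1) → α, F (List.ofFn g) = ∑ g : Fin n → α, ∑ i, F (List.ofFn g ++ [i]) := by
  rw [← (Fin.snocEquiv fun _ => α).sum_comp, Fintype.sum_prod_type, Finset.sum_comm]
  simp only [Fin.snocEquiv, Equiv.coe_fn_mk, List.ofFn_succ', Fin.snoc_castSucc, Fin.snoc_last,
    List.concat_eq_append]

theorem supp_smul {A : Matrix (Fin d) (Fin d) ℂ} {c : ℂ} (hc : c ≠ 0) : supp (c • A) = supp A := by
  rw [supp, map_smul, LinearMap.range_smul _ _ hc, supp]

theorem supp_sum_of_posSemidef {ι : Type*} [Fintype ι] {F : ι → Matrix (Fin d) (Fin d) ℂ}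
    (hF : ∀ i, (F i).PosSemidef) : supp (∑ i, F i) = ⨆ i, supp (F i) :=
  range_toLin'_sum_of_posSemidef hF

section Program

variable (E : Fin m → Fin r → Matrix (Fin d) (Fin d) ℂ) (M1 : Matrix (Fin d) (Fin d) ℂ)

theorem Tstep_posSemidef (i : Fin m) {ρ : Matrix (Fin d) (Fin d) ℂ} (hρ : ρ.PosSemidef) :
    (Tstep E M1 i ρ).PosSemidef :=
  posSemidef_sum _ fun _ _ => hρ.mul_mul_conjTranspose_same _

theorem Tword_posSemidef (f : List (Fin m)) {ρ : Matrix (Fin d) (Fin d) ℂ} (hρ : ρ.PosSemidef) :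
    (Tword E M1 f ρ).PosSemidef := by
  induction f generalizing ρ with
  | nil => exact hρ
  | cons i f ih => exact ih (Tstep_posSemidef E M1 i hρ)

theorem Tword_append_singleton (f : List (Fin m)) (i : Fin m) (ρ : Matrix (Fin d) (Fin d) ℂ) :
    Tword E M1 (f ++ [i]) ρ = Tstep E M1 i (Tword E M1 f ρ) := by
  simp [Tword, List.foldl_append]

theorem Tstep_sum {ι : Type*} (i : Fin m) (s : Finset ι) (F : ι → Matrix (Fin d) (Fin d) ℂ) :
    Tstep E M1 i (∑ g ∈ s, F g) = ∑ g ∈ s, Tstep E M1 i (F g) := by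
  simp only [Tstep, Finset.mul_sum, Finset.sum_mul]
  exact Finset.sum_comm

theorem Tstep_smul (i : Fin m) (c : ℂ) (ρ : Matrix (Fin d) (Fin d) ℂ) :
    Tstep E M1 i (c • ρ) = c • Tstep E M1 i ρ := by
  simp only [Tstep, Matrix.mul_smul, Matrix.smul_mul, Finset.smul_sum]

theorem Tavg_iterate (ρ : Matrix (Fin d) (Fin d) ℂ) (n : ℕ) :
    (Tavg E M1)^[n] ρ = (m : ℂ)⁻¹ ^ n • ∑ g : Fin n → Fin m, Tword E M1 (List.ofFn g) ρ := by
  induction n with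
  | zero => simp [Tword]
  | succ n ih =>
    simp only [Function.iterate_succ_apply', ih, Tavg, Tstep_smul, Tstep_sum,
      ← Tword_append_singleton, ← Finset.smul_sum, smul_smul, pow_succ']
    rw [Finset.sum_comm, Fintype.sum_ofFn_succ n fun f => Tword E M1 f ρ]

theorem supp_Tavg_iterate (hm : 0 < m) {ρ : Matrix (Fin d) (Fin d) ℂ} (hρ : ρ.PosSemidef)
    (n : ℕ) :
    supp ((Tavg E M1)^[n] ρ) = ⨆ g : Fin n → Fin m, supp (Tword E M1 (List.ofFn g) ρ) := by
  have hm' : (m : ℂ)⁻¹ ^ n ≠ 0 := by simp [hm.ne']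
  rw [Tavg_iterate, supp_smul hm', supp_sum_of_posSemidef fun g => Tword_posSemidef E M1 _ hρ]

end Program

theorem reachable_space_eq_average_general (d m r : ℕ) (hm : 0 < m)
    (E : Fin m → Fin r → Matrix (Fin d) (Fin d) ℂ)
    (M1 : Matrix (Fin d) (Fin d) ℂ)
    (ρ : Matrix (Fin d) (Fin d) ℂ) (hρ : ρ.PosSemidef) :
    HR E M1 ρ = ⨆ n : ℕ, supp ((Tavg E M1)^[n] ρ) := by
  simp only [HR, supp_Tavg_iterate E M1 hm hρ]
  exact List.iSup_eq_iSup_ofFn _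

/-- the reachable space of the nondeterministic program equals that of its
average deterministic program. -/
theorem reachable_space_eq_average (d m r : ℕ) (hd : 0 < d) (hm : 0 < m)
    (E : Fin m → Fin r → Matrix (Fin d) (Fin d) ℂ)
    (hE : ∀ i, ∑ j, (E i j)ᴴ * E i j = 1)
    (M0 M1 : Matrix (Fin d) (Fin d) ℂ)
    (hM : M0ᴴ * M0 + M1ᴴ * M1 = 1)
    (ρ : Matrix (Fin d) (Fin d) ℂ) (hρ : ρ.PosSemidef) (htr : ρ.trace ≤ 1) :
    HR E M1 ρ = ⨆ n : ℕ, supp ((Tavg E M1)^[n] ρ) :=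
  reachable_space_eq_average_general d m r hm E M1 ρ hρ
end
end

section
/- For every positive semidefinite d×d matrix ρ with tr(ρ) ≤ 1 and every n ≥ 0, H_R̄_{n+1}(ρ) = H_R̄_n(ρ) ⊔ T(H_R̄_n(ρ)), where for a subspace X of ℂ^d the image T(X) is defined as the join ⋁_{i=1}^m ⋁_j (E_{i,j} M_1)(X) of the images of X under the linear maps E_{i,j} M_1. -/
/-! For positive semidefinite `σ = BᴴB` one has `supp σ = range Bᴴ`, and `range (C Cᴴ) = range C`
by a rank count. Hence `supp (A σ Aᴴ) = A (supp σ)`, and, stacking Gram factors side by side,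
the support of a sum of positive semidefinite matrices is the join of their supports. So
`supp (T σ) = T (supp σ)` for every state `σ`; as `X ↦ T X` commutes with joins, applying it to
`H_R̄_n = ⋁_{k ≤ n} supp (T^k ρ)` produces exactly the new terms `supp (T^{k+1} ρ)`. -/

noncomputable section
open Matrix
open scoped ComplexOrder

variable {d m r : ℕ}

theorem iSup_fin_eq_iSup_lt {α : Type*} [CompleteLattice α] (u : ℕ → α) (n : ℕ) :
    ⨆ k : Fin n, u k = ⨆ k < n, u k :=
  le_antisymm (iSup_le fun k => le_biSup u k.2) (iSup₂_le fun k hk => le_iSup_of_le ⟨k, hk⟩ le_rfl)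

theorem iSup_lt_add_two {α : Type*} [CompleteLattice α] (u : ℕ → α) (n : ℕ) :
    ⨆ k < n + 2, u k = (⨆ k < n + 1, u k) ⊔ ⨆ k < n + 1, u (k + 1) := by
  rw [Nat.iSup_lt_succ' u (n + 1), Nat.iSup_lt_succ' u n, sup_assoc,
    sup_eq_right.mpr (biSup_mono fun _ hk => hk.trans n.lt_succ_self)]

namespace Matrix

section Range

variable {R : Type*} {l n n₁ n₂ : Type*}

theorem range_mulVecLin_fromCols [CommSemiring R] [Fintype n₁] [Fintype n₂]
    (A₁ : Matrix l n₁ R) (A₂ : Matrix l n₂ R) :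
    LinearMap.range (fromCols A₁ A₂).mulVecLin =
      LinearMap.range A₁.mulVecLin ⊔ LinearMap.range A₂.mulVecLin := by
  apply le_antisymm
  · rintro _ ⟨v, rfl⟩
    rw [mulVecLin_apply, fromCols_mulVec]
    exact Submodule.add_mem_sup ⟨_, rfl⟩ ⟨_, rfl⟩
  · refine sup_le ?_ ?_
    · rintro _ ⟨v, rfl⟩
      exact ⟨Sum.elim v 0, by simp⟩
    · rintro _ ⟨v, rfl⟩
      exact ⟨Sum.elim 0 v, by simp⟩

theorem range_mulVecLin_mul_conjTranspose [Field R] [PartialOrder R] [StarRing R]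
    [StarOrderedRing R] [Fintype l] [Fintype n] (B : Matrix l n R) :
    LinearMap.range (B * Bᴴ).mulVecLin = LinearMap.range B.mulVecLin :=
  Submodule.eq_of_le_of_finrank_le
    (by rw [mulVecLin_mul]; exact LinearMap.range_comp_le_range _ _)
    (rank_self_mul_conjTranspose B).ge

theorem range_mulVecLin_conjTranspose_mul_self [Field R] [PartialOrder R] [StarRing R]
    [StarOrderedRing R] [Fintype l] [Fintype n] (B : Matrix l n R) :
    LinearMap.range (Bᴴ * B).mulVecLin = LinearMap.range Bᴴ.mulVecLin := by
  simpa using range_mulVecLin_mul_conjTranspose Bᴴ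

end Range

namespace PosSemidef

variable {𝕜 : Type*} [RCLike 𝕜] {l n ι : Type*} [Fintype l] [Fintype n]

theorem exists_eq_conjTranspose_mul_self {P : Matrix n n 𝕜} (hP : P.PosSemidef) :
    ∃ B : Matrix n n 𝕜, P = Bᴴ * B := by
  classical
  open scoped MatrixOrder in
  exact CStarAlgebra.nonneg_iff_eq_star_mul_self.mp hP.nonneg

theorem range_mulVecLin_add {P Q : Matrix n n 𝕜} (hP : P.PosSemidef) (hQ : Q.PosSemidef) :
    LinearMap.range (P + Q).mulVecLin =
      LinearMap.range P.mulVecLin ⊔ LinearMap.range Q.mulVecLin := by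
  obtain ⟨B, rfl⟩ := hP.exists_eq_conjTranspose_mul_self
  obtain ⟨C, rfl⟩ := hQ.exists_eq_conjTranspose_mul_self
  have hsum : Bᴴ * B + Cᴴ * C = fromCols Bᴴ Cᴴ * (fromCols Bᴴ Cᴴ)ᴴ := by
    rw [conjTranspose_fromCols_eq_fromRows_conjTranspose, fromCols_mul_fromRows,
      conjTranspose_conjTranspose, conjTranspose_conjTranspose]
  rw [hsum, range_mulVecLin_mul_conjTranspose, range_mulVecLin_fromCols,
    range_mulVecLin_conjTranspose_mul_self, range_mulVecLin_conjTranspose_mul_self]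

theorem range_mulVecLin_sum {P : ι → Matrix n n 𝕜} (s : Finset ι)
    (hP : ∀ i ∈ s, (P i).PosSemidef) :
    LinearMap.range (∑ i ∈ s, P i).mulVecLin = ⨆ i ∈ s, LinearMap.range (P i).mulVecLin := by
  classical
  induction s using Finset.induction_on with
  | empty => simp
  | insert a s ha ih =>
    rw [Finset.sum_insert ha, Finset.iSup_insert,
      range_mulVecLin_add (hP a (s.mem_insert_self a)) (posSemidef_sum s fun i hi =>
        hP i (Finset.mem_insert_of_mem hi)),
      ih fun i hi => hP i (Finset.mem_insert_of_mem hi)]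

theorem range_mulVecLin_mul_mul_conjTranspose {P : Matrix n n 𝕜} (hP : P.PosSemidef)
    (A : Matrix l n 𝕜) :
    LinearMap.range (A * P * Aᴴ).mulVecLin = (LinearMap.range P.mulVecLin).map A.mulVecLin := by
  obtain ⟨B, rfl⟩ := hP.exists_eq_conjTranspose_mul_self
  have hgram : A * (Bᴴ * B) * Aᴴ = (A * Bᴴ) * (A * Bᴴ)ᴴ := by
    simp [conjTranspose_mul, Matrix.mul_assoc]
  rw [hgram, range_mulVecLin_mul_conjTranspose, mulVecLin_mul, LinearMap.range_comp,
    range_mulVecLin_conjTranspose_mul_self]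

end PosSemidef

end Matrix

theorem supp_eq_range_mulVecLin (A : Matrix (Fin d) (Fin d) ℂ) :
    supp A = LinearMap.range A.mulVecLin := by
  rw [supp, toLin'_apply']

section Tavg

variable (E : Fin m → Fin r → Matrix (Fin d) (Fin d) ℂ) (M1 : Matrix (Fin d) (Fin d) ℂ)

theorem posSemidef_Tstep (i : Fin m) {σ : Matrix (Fin d) (Fin d) ℂ} (hσ : σ.PosSemidef) :
    (Tstep E M1 i σ).PosSemidef :=
  posSemidef_sum _ fun _ _ => hσ.mul_mul_conjTranspose_same _

theorem posSemidef_Tavg {σ : Matrix (Fin d) (Fin d) ℂ} (hσ : σ.PosSemidef) :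
    (Tavg E M1 σ).PosSemidef :=
  (posSemidef_sum _ fun i _ => posSemidef_Tstep E M1 i hσ).smul (by positivity)

theorem posSemidef_iterate_Tavg {ρ : Matrix (Fin d) (Fin d) ℂ} (hρ : ρ.PosSemidef) (k : ℕ) :
    ((Tavg E M1)^[k] ρ).PosSemidef :=
  Function.Iterate.rec _ hρ (fun _ => posSemidef_Tavg E M1) k

theorem supp_Tstep (i : Fin m) {σ : Matrix (Fin d) (Fin d) ℂ} (hσ : σ.PosSemidef) :
    supp (Tstep E M1 i σ) = ⨆ j, (supp σ).map (toLin' (E i j * M1)) := by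
  simp only [supp_eq_range_mulVecLin, Tstep, toLin'_apply',
    PosSemidef.range_mulVecLin_sum _ fun j _ => hσ.mul_mul_conjTranspose_same _,
    hσ.range_mulVecLin_mul_mul_conjTranspose, Finset.mem_univ, iSup_pos]

theorem supp_Tavg {σ : Matrix (Fin d) (Fin d) ℂ} (hσ : σ.PosSemidef) :
    supp (Tavg E M1 σ) = ⨆ i, ⨆ j, (supp σ).map (toLin' (E i j * M1)) := by
  rcases Nat.eq_zero_or_pos m with rfl | hm
  · simp [Tavg, supp, iSup_of_empty]
  have hinv : (m : ℂ)⁻¹ ≠ 0 := by simp [hm.ne']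
  rw [Tavg, supp, map_smul, LinearMap.range_smul _ _ hinv, toLin'_apply',
    PosSemidef.range_mulVecLin_sum _ fun i _ => posSemidef_Tstep E M1 i hσ]
  simp only [← supp_eq_range_mulVecLin, supp_Tstep E M1 _ hσ, Finset.mem_univ, iSup_pos]

end Tavg

theorem HRbar_succ_general (d m r : ℕ)
    (E : Fin m → Fin r → Matrix (Fin d) (Fin d) ℂ)
    (M1 : Matrix (Fin d) (Fin d) ℂ)
    (ρ : Matrix (Fin d) (Fin d) ℂ) (hρ : ρ.PosSemidef) (n : ℕ) :
    HRbar E M1 ρ (n + 1) =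
      HRbar E M1 ρ n ⊔
        ⨆ i : Fin m, ⨆ j : Fin r,
          Submodule.map (Matrix.toLin' (E i j * M1)) (HRbar E M1 ρ n) := by
  set u : ℕ → Submodule ℂ (Fin d → ℂ) := fun k => supp ((Tavg E M1)^[k] ρ)
  have hHRbar (n : ℕ) : HRbar E M1 ρ n = ⨆ k < n + 1, u k := iSup_fin_eq_iSup_lt u (n + 1)
  have hsupp_succ (k : ℕ) : ⨆ i, ⨆ j, (u k).map (toLin' (E i j * M1)) = u (k + 1) := by
    simp only [u, Function.iterate_succ_apply', supp_Tavg E M1 (posSemidef_iterate_Tavg E M1 hρ k)]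
  rw [hHRbar, hHRbar, iSup_lt_add_two]
  simp only [Submodule.map_iSup, ← hsupp_succ]
  exact congrArg _ (iSup₂_comm _)

/-- `H_R̄_{n+1}(ρ) = H_R̄_n(ρ) ⊔ T(H_R̄_n(ρ))`, where the image of a subspace
`X` under `T` is the join of the images of `X` under the linear maps `E_{i,j} M₁`. -/
theorem HRbar_succ (d m r : ℕ) (hd : 0 < d) (hm : 0 < m)
    (E : Fin m → Fin r → Matrix (Fin d) (Fin d) ℂ)
    (hE : ∀ i, ∑ j, (E i j)ᴴ * E i j = 1)
    (M0 M1 : Matrix (Fin d) (Fin d) ℂ)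
    (hM : M0ᴴ * M0 + M1ᴴ * M1 = 1)
    (ρ : Matrix (Fin d) (Fin d) ℂ) (hρ : ρ.PosSemidef) (htr : ρ.trace ≤ 1) (n : ℕ) :
    HRbar E M1 ρ (n + 1) =
      HRbar E M1 ρ n ⊔
        ⨆ i : Fin m, ⨆ j : Fin r,
          Submodule.map (Matrix.toLin' (E i j * M1)) (HRbar E M1 ρ n) :=
  HRbar_succ_general d m r E M1 ρ hρ n
end
end
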